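/- arXiv:2510.10418 — 5 statements merged into one kernel-verified Lean document; each statement's English description precedes it below -/
import Mathlib

section
/- Let p and q be distinct primes and L a positive natural number divisible by lcm(p-1, q-1). If a₁, a₂ are natural numbers with gcd(a₁, pq) = p and gcd(a₂, pq) = q, then a₁^L + a₂^L ≡ 1 (mod pq). -/
theorem stmt_5 (p q L a₁ a₂ : ℕ) (hp : p.Prime) (hq : q.Prime) (hpq : p ≠ q)
    (hL : 0 < L) (hdvd : Nat.lcm (p - 1) (q - 1) ∣ L)
    (h₁ : Nat.gcd a₁ (p * q) = p) (h₂ : Nat.gcd a₂ (p * q) = q) :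
    a₁ ^ L + a₂ ^ L ≡ 1 [MOD p * q] := by
  have hcop : Nat.Coprime p q := (Nat.coprime_primes hp hq).2 hpq
  -- divisibility facts
  have hpa₁ : p ∣ a₁ := h₁ ▸ Nat.gcd_dvd_left a₁ (p * q)
  have hqa₂ : q ∣ a₂ := h₂ ▸ Nat.gcd_dvd_left a₂ (p * q)
  have hcop₂p : Nat.Coprime a₂ p := by
    rcases (Nat.coprime_or_dvd_of_prime hp a₂).symm with h | h
    · exact absurd ((Nat.dvd_gcd h (dvd_mul_right p q)).trans h₂.dvd)
        (fun hpq' => hpq (Nat.prime_dvd_prime_iff_eq hp hq |>.1 hpq'))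
    · exact h.symm
  have hcop₁q : Nat.Coprime a₁ q := by
    rcases (Nat.coprime_or_dvd_of_prime hq a₁).symm with h | h
    · exact absurd ((Nat.dvd_gcd h (dvd_mul_left q p)).trans h₁.dvd)
        (fun hqp' => hpq ((Nat.prime_dvd_prime_iff_eq hq hp).1 hqp').symm)
    · exact h.symm
  have hdp : (p - 1) ∣ L := (Nat.dvd_lcm_left _ _).trans hdvd
  have hdq : (q - 1) ∣ L := (Nat.dvd_lcm_right _ _).trans hdvd
  -- Fermat-type: x^L ≡ 1 mod r when coprime and (r-1) ∣ L
  have fermat : ∀ (x r : ℕ), r.Prime → Nat.Coprime x r → (r - 1) ∣ L →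
      x ^ L ≡ 1 [MOD r] := by
    intro x r hr hc hd
    obtain ⟨k, hk⟩ := hd
    have h1 : x ^ (r - 1) ≡ 1 [MOD r] := by
      have := Nat.ModEq.pow_totient hc
      rwa [Nat.totient_prime hr] at this
    calc x ^ L = (x ^ (r - 1)) ^ k := by rw [← pow_mul, hk]
      _ ≡ 1 ^ k [MOD r] := h1.pow k
      _ = 1 := one_pow k
  -- mod p
  have hmp : a₁ ^ L + a₂ ^ L ≡ 1 [MOD p] := by
    have h0 : a₁ ^ L ≡ 0 [MOD p] :=
      (Nat.modEq_zero_iff_dvd).2 (dvd_pow hpa₁ hL.ne')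
    calc a₁ ^ L + a₂ ^ L ≡ 0 + 1 [MOD p] := h0.add (fermat a₂ p hp hcop₂p hdp)
      _ = 1 := by ring
  have hmq : a₁ ^ L + a₂ ^ L ≡ 1 [MOD q] := by
    have h0 : a₂ ^ L ≡ 0 [MOD q] :=
      (Nat.modEq_zero_iff_dvd).2 (dvd_pow hqa₂ hL.ne')
    calc a₁ ^ L + a₂ ^ L ≡ 1 + 0 [MOD q] := (fermat a₁ q hq hcop₁q hdq).add h0
      _ = 1 := by ring
  exact (Nat.modEq_and_modEq_iff_modEq_mul hcop).1 ⟨hmp, hmq⟩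
end

section
/- Let p₁, ..., pₙ be distinct primes with product N = p₁·p₂⋯pₙ, and let a₁, ..., aₙ be natural numbers with gcd(aᵢ, N) = pᵢ for each i. Then for any positive natural number L divisible by lcm(p₁-1, p₂-1, ..., pₙ-1), we have a₁^L + a₂^L + ⋯ + aₙ^L ≡ n - 1 (mod N). -/
theorem stmt_9 (n : ℕ) (hn : 1 ≤ n) (p a : Fin n → ℕ)
    (hp : ∀ i, (p i).Prime) (hinj : Function.Injective p)
    (ha : ∀ i, Nat.gcd (a i) (∏ j, p j) = p i)
    (L : ℕ) (hL : 0 < L)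
    (hdvd : (Finset.univ.lcm fun i => p i - 1) ∣ L) :
    (∑ i, a i ^ L) ≡ n - 1 [MOD ∏ i, p i] := by
  have hpd : ∀ j, (∑ i, a i ^ L) ≡ n - 1 [MOD p j] := by
    intro j
    haveI := Fact.mk (hp j)
    rw [← ZMod.natCast_eq_natCast_iff]
    push_cast [Nat.cast_sub hn]
    have key : ∀ i, ((a i : ZMod (p j)) ^ L) = if i = j then 0 else 1 := by
      intro i
      by_cases h : i = j
      · subst h
        have hd : (p i : ℕ) ∣ a i := by
          rw [← ha i]; exact Nat.gcd_dvd_left _ _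
        simp [(ZMod.natCast_eq_zero_iff _ _).mpr hd, zero_pow hL.ne']
      · have hne : ¬ (p j ∣ a i) := by
          intro hd
          have : p j ∣ Nat.gcd (a i) (∏ k, p k) :=
            Nat.dvd_gcd hd (Finset.dvd_prod_of_mem _ (Finset.mem_univ j))
          rw [ha i] at this
          exact h (hinj ((Nat.prime_dvd_prime_iff_eq (hp j) (hp i)).mp this)).symm
        have hz : (a i : ZMod (p j)) ≠ 0 := by
          rwa [Ne, ZMod.natCast_eq_zero_iff]
        obtain ⟨k, hk⟩ : (p j - 1) ∣ L :=
          dvd_trans (Finset.dvd_lcm (f := fun i => p i - 1) (Finset.mem_univ j)) hdvd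
        have hf : (a i : ZMod (p j)) ^ (p j - 1) = 1 := by
          have := ZMod.pow_card_sub_one_eq_one hz
          simpa [ZMod.card] using this
        simp [h, hk, pow_mul, hf]
    rw [Finset.sum_congr rfl fun i _ => key i]
    have step : ∀ i : Fin n, (if i = j then (0 : ZMod (p j)) else 1)
        = 1 - (if i = j then 1 else 0) := by
      intro i; split <;> ring
    rw [Finset.sum_congr rfl fun i _ => step i]
    simp [Finset.sum_sub_distrib, Finset.sum_ite_eq', Finset.card_univ]
  simp only [Nat.modEq_iff_dvd] at hpd ⊢
  rw [Nat.cast_prod]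
  refine Fintype.prod_dvd_of_coprime ?_ hpd
  intro i j hij
  exact Int.isCoprime_iff_gcd_eq_one.mpr (by
    simpa [Int.gcd_natCast_natCast] using
      (Nat.coprime_primes (hp i) (hp j)).mpr (fun h => hij (hinj h)))
end

section
/- Let p < q < r be primes with q·r ≡ 1 (mod p), let L = lcm(p-1, q-1, r-1), and let a be a natural number with gcd(a, pqr) = r. Let a_q ∈ {1, ..., q-1} be the multiplicative inverse of a modulo q. Then a^L ≡ r·q·(1 - a·a_q) + a·a_q (mod pqr), as a congruence in ℤ. -/
lemma aux_fermat_pow (p a L : ℕ) (hp : p.Prime) (hco : Nat.Coprime a p)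
    (hd : (p - 1) ∣ L) : a ^ L ≡ 1 [MOD p] := by
  obtain ⟨k, rfl⟩ := hd
  rw [pow_mul]
  calc (a ^ (p - 1)) ^ k ≡ 1 ^ k [MOD p] :=
        Nat.ModEq.pow k (by simpa [Nat.totient_prime hp] using Nat.ModEq.pow_totient hco)
    _ = 1 := one_pow k

theorem stmt_12 (p q r a aq : ℕ) (hp : p.Prime) (hq : q.Prime) (hr : r.Prime)
    (hpq : p < q) (hqr : q < r) (hH : q * r ≡ 1 [MOD p])
    (h : Nat.gcd a (p * q * r) = r)
    (haq1 : 1 ≤ aq) (haq2 : aq ≤ q - 1) (hinv : a * aq ≡ 1 [MOD q]) :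
    (a : ℤ) ^ Nat.lcm (p - 1) (Nat.lcm (q - 1) (r - 1)) ≡
      (r : ℤ) * q * (1 - a * aq) + a * aq [ZMOD (p * q * r)] := by
  set L := Nat.lcm (p - 1) (Nat.lcm (q - 1) (r - 1)) with hL
  have hpr : p ≠ r := (hpq.trans hqr).ne
  have hqr' : q ≠ r := hqr.ne
  have hpq' : p ≠ q := hpq.ne
  -- r divides a
  have hra : r ∣ a := h ▸ Nat.gcd_dvd_left a (p * q * r)
  -- coprimality of a with p and q
  have hcap : Nat.Coprime a p := by
    rw [Nat.coprime_comm]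
    refine (Nat.Prime.coprime_iff_not_dvd hp).mpr (fun hdvd => ?_)
    have : p ∣ Nat.gcd a (p * q * r) :=
      Nat.dvd_gcd hdvd ⟨q * r, by ring⟩
    rw [h] at this
    exact hpr ((Nat.prime_dvd_prime_iff_eq hp hr).mp this)
  have hcaq : Nat.Coprime a q := by
    rw [Nat.coprime_comm]
    refine (Nat.Prime.coprime_iff_not_dvd hq).mpr (fun hdvd => ?_)
    have : q ∣ Nat.gcd a (p * q * r) :=
      Nat.dvd_gcd hdvd ⟨p * r, by ring⟩
    rw [h] at this
    exact hqr' ((Nat.prime_dvd_prime_iff_eq hq hr).mp this)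
  -- mod p
  have hLp : (p - 1) ∣ L := Nat.dvd_lcm_left _ _
  have hLq : (q - 1) ∣ L := (Nat.dvd_lcm_left _ _).trans (Nat.dvd_lcm_right _ _)
  have hmodp : (a : ℤ) ^ L ≡ (r : ℤ) * q * (1 - a * aq) + a * aq [ZMOD p] := by
    have h1 : (a : ℤ) ^ L ≡ 1 [ZMOD p] := by
      have := Int.natCast_modEq_iff.mpr (aux_fermat_pow p a L hp hcap hLp)
      simpa using this
    have h2 : ((q : ℤ) * r) ≡ 1 [ZMOD p] := by
      have := Int.natCast_modEq_iff.mpr hH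
      simpa using this
    calc (a : ℤ) ^ L ≡ 1 [ZMOD p] := h1
      _ = 1 * (1 - (a : ℤ) * aq) + a * aq := by ring
      _ ≡ (q : ℤ) * r * (1 - a * aq) + a * aq [ZMOD p] :=
          (h2.symm.mul_right _).add_right _
      _ = (r : ℤ) * q * (1 - a * aq) + a * aq := by ring
  -- mod q
  have hmodq : (a : ℤ) ^ L ≡ (r : ℤ) * q * (1 - a * aq) + a * aq [ZMOD q] := by
    have h1 : (a : ℤ) ^ L ≡ 1 [ZMOD q] := by
      have := Int.natCast_modEq_iff.mpr (aux_fermat_pow q a L hq hcaq hLq)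
      simpa using this
    have h2 : ((a : ℤ) * aq) ≡ 1 [ZMOD q] := by
      have := Int.natCast_modEq_iff.mpr hinv
      simpa using this
    have h3 : (r : ℤ) * q * (1 - a * aq) ≡ 0 [ZMOD q] :=
      (Int.modEq_iff_dvd.mpr (by exact ⟨-(r * (1 - a * aq)), by ring⟩))
    calc (a : ℤ) ^ L ≡ 1 [ZMOD q] := h1
      _ = 0 + 1 := by ring
      _ ≡ (r : ℤ) * q * (1 - a * aq) + a * aq [ZMOD q] := h3.symm.add h2.symm
  -- mod r
  have hmodr : (a : ℤ) ^ L ≡ (r : ℤ) * q * (1 - a * aq) + a * aq [ZMOD r] := by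
    have hL1 : 1 ≤ L := by
      have h2p : 2 ≤ p := hp.two_le
      have h2q : 2 ≤ q := hq.two_le
      have h2r : 2 ≤ r := hr.two_le
      exact Nat.lcm_pos (by omega) (Nat.lcm_pos (by omega) (by omega))
    have hra' : (r : ℤ) ∣ (a : ℤ) := Int.natCast_dvd_natCast.mpr hra
    have h1 : (r : ℤ) ∣ (a : ℤ) ^ L := hra'.trans (dvd_pow_self _ (by omega))
    have h2 : (r : ℤ) ∣ (r : ℤ) * q * (1 - a * aq) + a * aq :=
      dvd_add ⟨q * (1 - (a : ℤ) * aq), by ring⟩ (hra'.mul_right _)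
    exact (Int.modEq_iff_dvd.mpr (by exact (dvd_sub h2 h1))).symm.symm
  -- combine
  have cop_pq : IsCoprime (p : ℤ) (q : ℤ) :=
    Int.isCoprime_iff_gcd_eq_one.mpr (by
      simpa using (Nat.coprime_primes hp hq).mpr hpq')
  have cop_pr : IsCoprime (p : ℤ) (r : ℤ) :=
    Int.isCoprime_iff_gcd_eq_one.mpr (by
      simpa using (Nat.coprime_primes hp hr).mpr hpr)
  have cop_qr : IsCoprime (q : ℤ) (r : ℤ) :=
    Int.isCoprime_iff_gcd_eq_one.mpr (by
      simpa using (Nat.coprime_primes hq hr).mpr hqr')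
  rw [Int.modEq_iff_dvd] at hmodp hmodq hmodr ⊢
  exact (IsCoprime.mul_left cop_pr cop_qr).mul_dvd (cop_pq.mul_dvd hmodp hmodq) hmodr
end

section
/- Let p < q < r be primes with q·r ≡ 1 (mod p), let L = lcm(p-1, q-1, r-1), and let a be a natural number with gcd(a, pqr) = q. Let β ∈ {0, 1, ..., q-1} be the unique integer with r·β + 1 ≡ 0 (mod q). Then a^L ≡ r·(1 - q·r)·β + 1 (mod pqr), as a congruence in ℤ. -/
theorem stmt_13 (p q r a β : ℕ) (hp : p.Prime) (hq : q.Prime) (hr : r.Prime)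
    (hpq : p < q) (hqr : q < r) (hH : q * r ≡ 1 [MOD p])
    (h : Nat.gcd a (p * q * r) = q)
    (hβ : β ≤ q - 1) (hβq : r * β + 1 ≡ 0 [MOD q]) :
    (a : ℤ) ^ Nat.lcm (p - 1) (Nat.lcm (q - 1) (r - 1)) ≡
      (r : ℤ) * (1 - q * r) * β + 1 [ZMOD (p * q * r)] := by
  set L := Nat.lcm (p - 1) (Nat.lcm (q - 1) (r - 1)) with hLdef
  have hp2 := hp.two_le
  have hq2 := hq.two_le
  have hr2 := hr.two_le
  have hpq' : p ≠ q := hpq.ne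
  have hqr' : q ≠ r := hqr.ne
  have hrq' : r ≠ q := hqr.ne'
  -- q ∣ a
  have hqa : q ∣ a := h ▸ Nat.gcd_dvd_left a (p * q * r)
  -- p ∤ a
  have hpa : ¬ p ∣ a := by
    intro hd
    have : p ∣ Nat.gcd a (p * q * r) :=
      Nat.dvd_gcd hd ⟨q * r, by ring⟩
    rw [h] at this
    exact hpq' ((Nat.prime_dvd_prime_iff_eq hp hq).mp this)
  -- r ∤ a
  have hra : ¬ r ∣ a := by
    intro hd
    have : r ∣ Nat.gcd a (p * q * r) := Nat.dvd_gcd hd ⟨p * q, by ring⟩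
    rw [h] at this
    exact hrq' ((Nat.prime_dvd_prime_iff_eq hr hq).mp this)
  -- L is positive and divisible by p-1, r-1
  have hp1 : 0 < p - 1 := by omega
  have hq1 : 0 < q - 1 := by omega
  have hr1 : 0 < r - 1 := by omega
  have hLp : p - 1 ∣ L := Nat.dvd_lcm_left _ _
  have hLr : r - 1 ∣ L := dvd_trans (Nat.dvd_lcm_right _ _) (Nat.dvd_lcm_right _ _)
  have hLpos : 0 < L := Nat.pos_of_ne_zero
    (Nat.lcm_ne_zero hp1.ne' (Nat.lcm_ne_zero hq1.ne' hr1.ne'))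
  -- Fermat little: a^L ≡ 1 mod p and mod r
  have fermat : ∀ s : ℕ, s.Prime → ¬ s ∣ a → s - 1 ∣ L → a ^ L ≡ 1 [MOD s] := by
    intro s hs hsa hsL
    obtain ⟨k, hk⟩ := hsL
    have hcop : a.Coprime s := (hs.coprime_iff_not_dvd.mpr hsa).symm
    have := Nat.ModEq.pow_totient hcop
    rw [Nat.totient_prime hs] at this
    calc a ^ L = (a ^ (s - 1)) ^ k := by rw [hk, pow_mul]
      _ ≡ 1 ^ k [MOD s] := this.pow k
      _ = 1 := one_pow k
  have hmodp : a ^ L ≡ 1 [MOD p] := fermat p hp hpa hLp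
  have hmodr : a ^ L ≡ 1 [MOD r] := fermat r hr hra hLr
  -- now in ℤ
  set X : ℤ := (r : ℤ) * (1 - q * r) * β + 1 with hX
  rw [Int.ModEq]
  have goalp : (a : ℤ) ^ L ≡ X [ZMOD (p : ℤ)] := by
    have h1 : (a : ℤ) ^ L ≡ 1 [ZMOD (p : ℤ)] := by
      have := Int.natCast_modEq_iff.mpr hmodp
      push_cast at this ⊢
      exact this
    have h2 : X ≡ 1 [ZMOD (p : ℤ)] := by
      have hd : (p : ℤ) ∣ (q * r : ℤ) - 1 := by
        have := Int.natCast_modEq_iff.mpr hH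
        push_cast at this
        exact Int.ModEq.dvd this.symm
      rw [Int.modEq_iff_dvd]
      rw [show (1 : ℤ) - X = ((q * r : ℤ) - 1) * ((r : ℤ) * β) by rw [hX]; ring]
      exact hd.mul_right _
    exact h1.trans h2.symm
  have goalr : (a : ℤ) ^ L ≡ X [ZMOD (r : ℤ)] := by
    have h1 : (a : ℤ) ^ L ≡ 1 [ZMOD (r : ℤ)] := by
      have := Int.natCast_modEq_iff.mpr hmodr
      push_cast at this ⊢
      exact this
    have h2 : X ≡ 1 [ZMOD (r : ℤ)] := by
      rw [Int.modEq_iff_dvd]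
      rw [show (1 : ℤ) - X = (r:ℤ) * (-((1 - q * r) * β)) by rw [hX]; ring]
      exact Dvd.intro _ rfl
    exact h1.trans h2.symm
  have goalq : (a : ℤ) ^ L ≡ X [ZMOD (q : ℤ)] := by
    have h1 : (a : ℤ) ^ L ≡ 0 [ZMOD (q : ℤ)] := by
      rw [Int.modEq_zero_iff_dvd]
      exact dvd_pow (Int.natCast_dvd_natCast.mpr hqa) hLpos.ne'
    have h2 : X ≡ 0 [ZMOD (q : ℤ)] := by
      have hd : (q : ℤ) ∣ (r : ℤ) * β + 1 := by
        have := Int.natCast_modEq_iff.mpr hβq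
        push_cast at this
        simpa [Int.modEq_zero_iff_dvd] using this
      rw [Int.modEq_zero_iff_dvd]
      rw [show X = ((r:ℤ) * β + 1) - (q:ℤ) * ((r:ℤ) * (r:ℤ) * β) by rw [hX]; ring]
      exact dvd_sub hd (Dvd.intro _ rfl)
    exact h1.trans h2.symm
  -- combine via coprimality
  have cpq : IsCoprime (p : ℤ) (q : ℤ) :=
    Nat.isCoprime_iff_coprime.mpr ((Nat.coprime_primes hp hq).mpr hpq')
  have cpr : IsCoprime (p : ℤ) (r : ℤ) :=
    Nat.isCoprime_iff_coprime.mpr ((Nat.coprime_primes hp hr).mpr (hpq.trans hqr).ne)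
  have cqr : IsCoprime (q : ℤ) (r : ℤ) :=
    Nat.isCoprime_iff_coprime.mpr ((Nat.coprime_primes hq hr).mpr hqr')
  have hdvd : ((p : ℤ) * q * r) ∣ (X - (a : ℤ) ^ L) := by
    have dp := Int.ModEq.dvd goalp
    have dq := Int.ModEq.dvd goalq
    have dr := Int.ModEq.dvd goalr
    exact (cpr.mul_left cqr).mul_dvd (cpq.mul_dvd dp dq) dr
  have : (a : ℤ) ^ L ≡ X [ZMOD ((p : ℤ) * q * r)] := Int.modEq_iff_dvd.mpr hdvd
  rw [Int.ModEq] at this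
  push_cast
  convert this using 2 <;> push_cast <;> ring
end

section
/- Let p < q < r be primes with q·r ≡ 1 (mod p) and L = lcm(p-1, q-1, r-1). If a₁, a₂, a₃ are natural numbers with gcd(a₁, pqr) = p, gcd(a₂, pqr) = q, and gcd(a₃, pqr) = r, then a₁^L + a₂^L + a₃^L ≡ 2 (mod pqr). -/
private lemma pow_one_of_dvd {a n d L : ℕ} (hd : d ∣ L) (h : a ^ d ≡ 1 [MOD n]) :
    a ^ L ≡ 1 [MOD n] := by
  obtain ⟨k, rfl⟩ := hd
  calc a ^ (d * k) = (a ^ d) ^ k := by rw [pow_mul]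
    _ ≡ 1 ^ k [MOD n] := h.pow k
    _ = 1 := one_pow k

private lemma fermat_pow {a s L : ℕ} (hs : s.Prime) (h : ¬ s ∣ a) (hd : s - 1 ∣ L) :
    a ^ L ≡ 1 [MOD s] := by
  apply pow_one_of_dvd hd
  rw [← Nat.totient_prime hs]
  exact Nat.ModEq.pow_totient ((Nat.coprime_comm).mp (hs.coprime_iff_not_dvd.mpr h))

theorem stmt_15 (p q r a₁ a₂ a₃ : ℕ) (hp : p.Prime) (hq : q.Prime) (hr : r.Prime)
    (hpq : p < q) (hqr : q < r) (hH : q * r ≡ 1 [MOD p])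
    (h₁ : Nat.gcd a₁ (p * q * r) = p) (h₂ : Nat.gcd a₂ (p * q * r) = q)
    (h₃ : Nat.gcd a₃ (p * q * r) = r) :
    a₁ ^ Nat.lcm (p - 1) (Nat.lcm (q - 1) (r - 1)) +
      a₂ ^ Nat.lcm (p - 1) (Nat.lcm (q - 1) (r - 1)) +
      a₃ ^ Nat.lcm (p - 1) (Nat.lcm (q - 1) (r - 1)) ≡ 2 [MOD p * q * r] := by
  set L := Nat.lcm (p - 1) (Nat.lcm (q - 1) (r - 1)) with hL
  have hpne : p ≠ q := hpq.ne
  have hqne : q ≠ r := hqr.ne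
  have hpne' : p ≠ r := (hpq.trans hqr).ne
  -- divisibilities into L
  have hdp : p - 1 ∣ L := Nat.dvd_lcm_left _ _
  have hdq : q - 1 ∣ L := dvd_trans (Nat.dvd_lcm_left _ _) (Nat.dvd_lcm_right _ _)
  have hdr : r - 1 ∣ L := dvd_trans (Nat.dvd_lcm_right _ _) (Nat.dvd_lcm_right _ _)
  have hLpos : 0 < L := Nat.pos_of_ne_zero (by
    simp [hL, Nat.lcm_ne_zero, Nat.sub_ne_zero_of_lt hp.one_lt,
      Nat.sub_ne_zero_of_lt hq.one_lt, Nat.sub_ne_zero_of_lt hr.one_lt])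
  -- which prime divides which aᵢ
  have dvd_of_gcd : ∀ a s : ℕ, Nat.gcd a (p * q * r) = s → s ∣ a := by
    intro a s h; rw [← h]; exact Nat.gcd_dvd_left _ _
  have hpa₁ : p ∣ a₁ := dvd_of_gcd _ _ h₁
  have hqa₂ : q ∣ a₂ := dvd_of_gcd _ _ h₂
  have hra₃ : r ∣ a₃ := dvd_of_gcd _ _ h₃
  -- non-divisibilities
  have hndvd : ∀ (a : ℕ) (s t : ℕ), s.Prime → t.Prime → s ∣ p * q * r →
      Nat.gcd a (p * q * r) = t → s ≠ t → ¬ s ∣ a := by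
    intro a s t hs ht hsd hg hst hsa
    have : s ∣ t := hg ▸ Nat.dvd_gcd hsa hsd
    exact hst ((Nat.prime_dvd_prime_iff_eq hs ht).mp this)
  have hpd : p ∣ p * q * r := ⟨q * r, by ring⟩
  have hqd : q ∣ p * q * r := ⟨p * r, by ring⟩
  have hrd : r ∣ p * q * r := ⟨p * q, by ring⟩
  have hpa₂ : ¬ p ∣ a₂ := hndvd a₂ p q hp hq hpd h₂ hpne
  have hpa₃ : ¬ p ∣ a₃ := hndvd a₃ p r hp hr hpd h₃ hpne'
  have hqa₁ : ¬ q ∣ a₁ := hndvd a₁ q p hq hp hqd h₁ hpne.symm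
  have hqa₃ : ¬ q ∣ a₃ := hndvd a₃ q r hq hr hqd h₃ hqne
  have hra₁ : ¬ r ∣ a₁ := hndvd a₁ r p hr hp hrd h₁ hpne'.symm
  have hra₂ : ¬ r ∣ a₂ := hndvd a₂ r q hr hq hrd h₂ hqne.symm
  -- zero mods
  have zmod : ∀ (a s : ℕ), s ∣ a → a ^ L ≡ 0 [MOD s] := by
    intro a s h
    exact (Nat.modEq_zero_iff_dvd).mpr (dvd_pow h hLpos.ne')
  -- congruence mod each prime
  have modp : a₁ ^ L + a₂ ^ L + a₃ ^ L ≡ 2 [MOD p] := by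
    calc a₁ ^ L + a₂ ^ L + a₃ ^ L
        ≡ 0 + 1 + 1 [MOD p] :=
          ((zmod a₁ p hpa₁).add (fermat_pow hp hpa₂ hdp)).add (fermat_pow hp hpa₃ hdp)
      _ = 2 := by norm_num
  have modq : a₁ ^ L + a₂ ^ L + a₃ ^ L ≡ 2 [MOD q] := by
    calc a₁ ^ L + a₂ ^ L + a₃ ^ L
        ≡ 1 + 0 + 1 [MOD q] :=
          ((fermat_pow hq hqa₁ hdq).add (zmod a₂ q hqa₂)).add (fermat_pow hq hqa₃ hdq)
      _ = 2 := by norm_num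
  have modr : a₁ ^ L + a₂ ^ L + a₃ ^ L ≡ 2 [MOD r] := by
    calc a₁ ^ L + a₂ ^ L + a₃ ^ L
        ≡ 1 + 1 + 0 [MOD r] :=
          ((fermat_pow hr hra₁ hdr).add (fermat_pow hr hra₂ hdr)).add (zmod a₃ r hra₃)
      _ = 2 := by norm_num
  -- combine by CRT
  have cpq : Nat.Coprime p q := (Nat.coprime_primes hp hq).mpr hpne
  have cpr : Nat.Coprime p r := (Nat.coprime_primes hp hr).mpr hpne'
  have cqr : Nat.Coprime q r := (Nat.coprime_primes hq hr).mpr hqne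
  have hqr' : a₁ ^ L + a₂ ^ L + a₃ ^ L ≡ 2 [MOD q * r] :=
    (Nat.modEq_and_modEq_iff_modEq_mul cqr).mp ⟨modq, modr⟩
  rw [mul_assoc]
  exact (Nat.modEq_and_modEq_iff_modEq_mul (Nat.Coprime.mul_right cpq cpr)).mp ⟨modp, hqr'⟩
end
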